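/- The pure braid group PB_3 is isomorphic to F_2 × ℤ, where F_2 is the free group freely generated by g_1² and g_2², and the ℤ factor is the center of B_3 generated by (g_1 g_2 g_1)² = (g_1 g_2)^3. -/
import Mathlib

/-- The braid relation for the braid group `B₃` on generators `g₁, g₂`. -/
def braidRel3 : Set (FreeGroup (Fin 2)) :=
  {FreeGroup.of 0 * FreeGroup.of 1 * FreeGroup.of 0 *
    (FreeGroup.of 1 * FreeGroup.of 0 * FreeGroup.of 1)⁻¹}

/-- The braid group on three strands, presented as `⟨g₁,g₂ | g₁g₂g₁ = g₂g₁g₂⟩`. -/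
abbrev BraidGroup3 := PresentedGroup braidRel3

namespace PB3

open Equiv

/-- first generator -/
def a : BraidGroup3 := PresentedGroup.of 0
/-- second generator -/
def b : BraidGroup3 := PresentedGroup.of 1

lemma braid : a * b * a = b * a * b := by
  have h : (PresentedGroup.mk braidRel3) (FreeGroup.of 0 * FreeGroup.of 1 * FreeGroup.of 0 *
      (FreeGroup.of 1 * FreeGroup.of 0 * FreeGroup.of 1)⁻¹) = 1 := by
    apply (QuotientGroup.eq_one_iff _).mpr
    exact Subgroup.subset_normalClosure rfl
  simp only [map_mul, map_inv] at h
  exact mul_inv_eq_one.mp h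

/-- the generator of the center -/
def c : BraidGroup3 := (a * b) ^ 3

lemma c_eq : c = (a*b*a)*(a*b*a) := by
  have : c = (a*b*a)*(b*a*b) := by rw [c]; simp [pow_succ, mul_assoc]
  rw [this, ← braid]

lemma delta_a : (a*b*a) * a = b * (a*b*a) := by
  nth_rewrite 1 [braid]; simp [mul_assoc]

lemma delta_b : (a*b*a) * b = a * (a*b*a) := by
  have : (a*b*a)*b = a*(b*a*b) := by simp [mul_assoc]
  rw [this, ← braid]

lemma comm_ca : c * a = a * c := by
  rw [c_eq, mul_assoc, delta_a, ← mul_assoc, delta_b, mul_assoc]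

lemma comm_cb : c * b = b * c := by
  rw [c_eq, mul_assoc, delta_b, ← mul_assoc, delta_a, mul_assoc]

lemma comm_c (g : BraidGroup3) : Commute c g := by
  have : g ∈ Subgroup.centralizer {c} := by
    apply PresentedGroup.generated_by
    intro j
    rw [Subgroup.mem_centralizer_iff]
    fin_cases j <;> simp only [Set.mem_singleton_iff, forall_eq]
    · exact comm_ca
    · exact comm_cb
  exact (Subgroup.mem_centralizer_iff.mp this) c rfl

/-- `c = a²·b·a²·b` -/
lemma c_eq2 : c = a*a*b*a*a*b := by
  have h1 : c = a*(b*a*b)*(a*b) := by rw [c]; simp [pow_succ, mul_assoc]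
  rw [h1, ← braid]; simp [mul_assoc]

/-- `c = b²·a·b²·a` -/
lemma c_eq3 : c = b*b*a*b*b*a := by
  have h0 : c = a⁻¹ * (c * a) := by rw [comm_ca, inv_mul_cancel_left]
  have h1 : c * a = a * ((b*(a*b*a))*(b*a)) := by rw [c]; simp [pow_succ, mul_assoc]
  rw [h0, h1, braid]
  simp [mul_assoc]

/-- the target abelian-ish group -/
abbrev NN := FreeGroup Bool × Multiplicative ℤ

def X : NN := (FreeGroup.of true, 1)
def Y : NN := (FreeGroup.of false, 1)
def Z : NN := (1, Multiplicative.ofAdd 1)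

/-- the map `F₂ → B₃`, `X ↦ a²`, `Y ↦ b²` -/
def fA : FreeGroup Bool →* BraidGroup3 :=
  FreeGroup.lift (fun t => if t then a^2 else b^2)

/-- `e : F₂ × ℤ → B₃` -/
def e : NN →* BraidGroup3 :=
  fA.noncommCoprod (zpowersHom _ c) (fun w k => ((comm_c (fA w)).symm).zpow_right _)

lemma e_apply (w : FreeGroup Bool) (k : Multiplicative ℤ) :
    e (w, k) = fA w * c ^ k.toAdd := rfl

lemma e_X : e X = a^2 := by simp [X, e_apply, fA]
lemma e_Y : e Y = b^2 := by simp [Y, e_apply, fA]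
lemma e_Z : e Z = c := by simp [Z, e_apply, fA]

/-- the symmetric group target generators -/
def s : Perm (Fin 3) := swap 0 1
def t : Perm (Fin 3) := swap 1 2

/-- the projection `π : B₃ → S₃` -/
def pr : BraidGroup3 →* Perm (Fin 3) :=
  PresentedGroup.toGroup (f := fun i : Fin 2 => if i = 0 then s else t)
    (by
      intro r hr
      rw [braidRel3, Set.mem_singleton_iff] at hr
      subst hr
      simp only [map_mul, map_inv, FreeGroup.lift_apply_of]
      rw [mul_inv_eq_one]
      decide)

lemma pr_a : pr a = s := by simp [pr, a, PresentedGroup.toGroup.of]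
lemma pr_b : pr b = t := by simp [pr, b, PresentedGroup.toGroup.of]


/-- the right-translation action of `S₃` on `S₃ → NN` -/
def rAct : Perm (Fin 3) →* MulAut (Perm (Fin 3) → NN) where
  toFun σ :=
    { toFun := fun f q => f (q * σ)
      invFun := fun f q => f (q * σ⁻¹)
      left_inv := fun f => by funext q; simp [mul_assoc]
      right_inv := fun f => by funext q; simp [mul_assoc]
      map_mul' := fun f g => rfl }
  map_one' := MulEquiv.ext fun f => funext fun q => by show f (q * 1) = f q; rw [mul_one]
  map_mul' := fun σ τ => MulEquiv.ext fun f => funext fun q => by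
    show f (q * (σ * τ)) = f (q * σ * τ); rw [mul_assoc]

/-- the wreath-like monomial group -/
abbrev W := (Perm (Fin 3) → NN) ⋊[rAct] Perm (Fin 3)

def f₀ : Perm (Fin 3) → NN := fun q =>
  if q = s then X else if q = t*s then X⁻¹*Y⁻¹*Z else if q = s*t*s then Y else 1

def f₁ : Perm (Fin 3) → NN := fun q =>
  if q = t then Y else if q = s*t then Y⁻¹*X⁻¹*Z else if q = s*t*s then X else 1

/-- the Krasner–Kaloujnine style embedding `Φ : B₃ → W` -/
def Phi : BraidGroup3 →* W :=
  PresentedGroup.toGroup (f := fun i : Fin 2 => if i = 0 then ⟨f₀, s⟩ else ⟨f₁, t⟩)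
    (by
      intro r hr
      rw [braidRel3, Set.mem_singleton_iff] at hr
      subst hr
      simp only [map_mul, map_inv, FreeGroup.lift_apply_of]
      rw [mul_inv_eq_one]
      ext : 1
      · show f₀ * rAct s f₁ * rAct (s*t) f₀ = f₁ * rAct t f₀ * rAct (t*s) f₁
        funext q
        revert q
        decide
      · show s * t * s = t * s * t
        decide)

lemma Phi_a : Phi a = ⟨f₀, s⟩ := by simp [Phi, a, PresentedGroup.toGroup.of]
lemma Phi_b : Phi b = ⟨f₁, t⟩ := by simp [Phi, b, PresentedGroup.toGroup.of]

lemma Phi_right (g : BraidGroup3) : (Phi g).right = pr g := by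
  have : SemidirectProduct.rightHom.comp Phi = pr := by
    apply PresentedGroup.ext
    intro x
    fin_cases x
    · show (Phi a).right = pr a
      rw [Phi_a, pr_a]
    · show (Phi b).right = pr b
      rw [Phi_b, pr_b]
  exact DFunLike.congr_fun this g

lemma pr_c : pr c = 1 := by rw [c, map_pow, map_mul, pr_a, pr_b]; decide

lemma pr_fA (w : FreeGroup Bool) : pr (fA w) = 1 := by
  have h : pr.comp fA = 1 := by
    apply FreeGroup.ext_hom
    intro x
    cases x
    · show pr (fA (FreeGroup.of false)) = 1
      rw [fA, FreeGroup.lift_apply_of, if_neg (by simp), map_pow, pr_b]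
      decide
    · show pr (fA (FreeGroup.of true)) = 1
      rw [fA, FreeGroup.lift_apply_of, if_pos rfl, map_pow, pr_a]
      decide
  exact DFunLike.congr_fun h w

lemma pr_e (n : NN) : pr (e n) = 1 := by
  obtain ⟨w, k⟩ := n
  rw [e_apply, map_mul, map_zpow, pr_fA, pr_c, one_mul, one_zpow]

lemma Phi_e_right (n : NN) : (Phi (e n)).right = 1 := by
  rw [Phi_right, pr_e]

/-- the retraction `NN → NN` through `B₃` -/
def theta : NN →* NN where
  toFun n := (Phi (e n)).left 1
  map_one' := by show (Phi (e 1)).left 1 = 1; rw [map_one, map_one]; rfl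
  map_mul' m n := by
    simp only [map_mul]
    rw [SemidirectProduct.mul_left, Phi_e_right m, map_one]
    rfl

lemma theta_X : theta X = X := by
  show (Phi (e X)).left 1 = X
  rw [e_X, sq, map_mul, Phi_a]
  show f₀ 1 * f₀ (1 * s) = X
  decide

lemma theta_Y : theta Y = Y := by
  show (Phi (e Y)).left 1 = Y
  rw [e_Y, sq, map_mul, Phi_b]
  show f₁ 1 * f₁ (1 * t) = Y
  decide

lemma theta_Z : theta Z = Z := by
  show (Phi (e Z)).left 1 = Z
  rw [e_Z, c, map_pow, map_mul, Phi_a, Phi_b]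
  show (((⟨f₀, s⟩ : W) * (⟨f₁, t⟩ : W)) ^ 3).left 1 = Z
  decide

lemma theta_id (n : NN) : theta n = n := by
  obtain ⟨w, k⟩ := n
  have hw : theta (w, 1) = (w, 1) := by
    have h : theta.comp (MonoidHom.inl (FreeGroup Bool) (Multiplicative ℤ)) =
        MonoidHom.inl _ _ := by
      apply FreeGroup.ext_hom
      intro x
      cases x
      · exact theta_Y
      · exact theta_X
    exact DFunLike.congr_fun h w
  have hk : theta (1, k) = (1, k) := by
    have h : theta.comp (MonoidHom.inr (FreeGroup Bool) (Multiplicative ℤ)) =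
        MonoidHom.inr _ _ :=
      MonoidHom.ext_mint theta_Z
    exact DFunLike.congr_fun h k
  have hsplit : (w, k) = (w, (1 : Multiplicative ℤ)) * ((1 : FreeGroup Bool), k) := by
    rw [Prod.mk_mul_mk, mul_one, one_mul]
  rw [hsplit, map_mul, hw, hk]

lemma e_injective : Function.Injective e := by
  intro m n h
  have : theta m = theta n := by
    show (Phi (e m)).left 1 = (Phi (e n)).left 1
    rw [h]
  rwa [theta_id, theta_id] at this

/-! ### The transversal and the Schreier-type argument -/

/-- a transversal of the six cosets -/
def tau : Perm (Fin 3) → BraidGroup3 := fun q =>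
  if q = 1 then 1 else if q = s then a else if q = t then b
  else if q = s*t then a*b else if q = t*s then b*a else a*b*a

lemma tau_one : tau 1 = 1 := if_pos rfl
lemma tau_s : tau s = a := by
  rw [tau, if_neg (by decide), if_pos rfl]
lemma tau_t : tau t = b := by
  rw [tau, if_neg (by decide), if_neg (by decide), if_pos rfl]
lemma tau_st : tau (s*t) = a*b := by
  rw [tau, if_neg (by decide), if_neg (by decide), if_neg (by decide), if_pos rfl]
lemma tau_ts : tau (t*s) = b*a := by
  rw [tau, if_neg (by decide), if_neg (by decide), if_neg (by decide), if_neg (by decide),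
    if_pos rfl]
lemma tau_sts : tau (s*t*s) = a*b*a := by
  rw [tau, if_neg (by decide), if_neg (by decide), if_neg (by decide), if_neg (by decide),
    if_neg (by decide)]

lemma e_XYZ : e (X⁻¹*Y⁻¹*Z) = (a^2)⁻¹ * ((b^2)⁻¹ * c) := by
  rw [map_mul, map_mul, map_inv, map_inv, e_X, e_Y, e_Z, mul_assoc]

lemma e_YXZ : e (Y⁻¹*X⁻¹*Z) = (b^2)⁻¹ * ((a^2)⁻¹ * c) := by
  rw [map_mul, map_mul, map_inv, map_inv, e_X, e_Y, e_Z, mul_assoc]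

lemma key1 : b*a*a = (a^2)⁻¹ * ((b^2)⁻¹ * c) * b := by
  rw [← (comm_c ((b^2)⁻¹)).eq, c_eq2, sq, sq]
  simp [mul_assoc]

lemma key2 : a*b*a*a = b^2*(a*b) := by
  rw [sq, show b*b*(a*b) = b*(b*a*b) from by simp [mul_assoc], ← braid]
  nth_rewrite 1 [braid]
  simp [mul_assoc]

lemma key3 : a*b*b = (b^2)⁻¹ * ((a^2)⁻¹ * c) * a := by
  rw [← (comm_c ((a^2)⁻¹)).eq, c_eq3, sq, sq]
  simp [mul_assoc]

lemma key4 : a*b*a*b = a^2*(b*a) := by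
  rw [sq, show a*a*(b*a) = a*(a*b*a) from by simp [mul_assoc]]
  nth_rewrite 2 [braid]
  simp [mul_assoc]

/-- the subgroup of elements that permute the cosets of `e.range` as prescribed -/
def D : Subgroup BraidGroup3 where
  carrier := {g | ∀ q : Perm (Fin 3), ∃ n : NN, tau q * g = e n * tau (q * pr g)}
  one_mem' := by
    intro q
    exact ⟨1, by rw [map_one, map_one, mul_one, mul_one, one_mul]⟩
  mul_mem' := by
    intro g h hg hh q
    obtain ⟨n, hn⟩ := hg q
    obtain ⟨m, hm⟩ := hh (q * pr g)
    refine ⟨n * m, ?_⟩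
    rw [map_mul, map_mul, ← mul_assoc, hn, mul_assoc, hm, ← mul_assoc, ← mul_assoc, mul_assoc]
  inv_mem' := by
    intro g hg q
    obtain ⟨n, hn⟩ := hg (q * (pr g)⁻¹)
    rw [inv_mul_cancel_right] at hn
    refine ⟨n⁻¹, ?_⟩
    rw [map_inv, map_inv, eq_inv_mul_iff_mul_eq, ← mul_assoc, ← hn, mul_assoc,
      mul_inv_cancel, mul_one]

lemma perm_cases (q : Perm (Fin 3)) :
    q = 1 ∨ q = s ∨ q = t ∨ q = s*t ∨ q = t*s ∨ q = s*t*s := by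
  revert q; decide

lemma mem_a : a ∈ D := by
  intro q
  rcases perm_cases q with rfl | rfl | rfl | rfl | rfl | rfl
  · refine ⟨1, ?_⟩
    rw [pr_a, tau_one, one_mul, map_one, one_mul, one_mul, tau_s]
  · refine ⟨X, ?_⟩
    rw [pr_a, show s*s = (1 : Perm (Fin 3)) from by decide, tau_s, tau_one, e_X, mul_one, sq]
  · refine ⟨1, ?_⟩
    rw [pr_a, tau_t, map_one, one_mul, tau_ts]
  · refine ⟨1, ?_⟩
    rw [pr_a, tau_st, map_one, one_mul, tau_sts]
  · refine ⟨X⁻¹*Y⁻¹*Z, ?_⟩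
    rw [pr_a, show t*s*s = t from by decide, tau_ts, tau_t, e_XYZ]
    exact key1
  · refine ⟨Y, ?_⟩
    rw [pr_a, show s*t*s*s = s*t from by decide, tau_sts, tau_st, e_Y]
    exact key2

lemma mem_b : b ∈ D := by
  intro q
  rcases perm_cases q with rfl | rfl | rfl | rfl | rfl | rfl
  · refine ⟨1, ?_⟩
    rw [pr_b, tau_one, one_mul, map_one, one_mul, one_mul, tau_t]
  · refine ⟨1, ?_⟩
    rw [pr_b, tau_s, map_one, one_mul, tau_st]
  · refine ⟨Y, ?_⟩
    rw [pr_b, show t*t = (1 : Perm (Fin 3)) from by decide, tau_t, tau_one, e_Y, mul_one, sq]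
  · refine ⟨Y⁻¹*X⁻¹*Z, ?_⟩
    rw [pr_b, show s*t*t = s from by decide, tau_st, tau_s, e_YXZ]
    exact key3
  · refine ⟨1, ?_⟩
    rw [pr_b, show t*s*t = s*t*s from by decide, tau_ts, tau_sts, map_one, one_mul]
    exact braid.symm
  · refine ⟨X, ?_⟩
    rw [pr_b, show s*t*s*t = t*s from by decide, tau_sts, tau_ts, e_X]
    exact key4

lemma range_eq_ker : e.range = pr.ker := by
  ext g
  constructor
  · rintro ⟨n, rfl⟩
    exact pr_e n
  · intro hg
    have hD : g ∈ D := by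
      apply PresentedGroup.generated_by
      intro j
      fin_cases j
      · exact mem_a
      · exact mem_b
    obtain ⟨n, hn⟩ := hD 1
    rw [tau_one, one_mul, MonoidHom.mem_ker.mp hg, mul_one, tau_one, mul_one] at hn
    exact ⟨n, hn.symm⟩

end PB3

/-- The pure braid group `PB₃` (kernel of `B₃ → S₃`, `gᵢ ↦ (i,i+1)`) is isomorphic to
`F₂ × ℤ`, where `F₂` is freely generated by `g₁², g₂²` and the `ℤ` factor is the center
of `B₃`, generated by `(g₁g₂)³ = (g₁g₂g₁)²`. -/
theorem pureBraid3_iso_free_times_int :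
    ∃ π : BraidGroup3 →* Equiv.Perm (Fin 3),
      π (PresentedGroup.of 0) = Equiv.swap 0 1 ∧
      π (PresentedGroup.of 1) = Equiv.swap 1 2 ∧
      ∃ e : FreeGroup Bool × Multiplicative ℤ →* BraidGroup3,
        Function.Injective e ∧
        e.range = π.ker ∧
        e (FreeGroup.of true, 1) = (PresentedGroup.of 0 : BraidGroup3) ^ 2 ∧
        e (FreeGroup.of false, 1) = (PresentedGroup.of 1 : BraidGroup3) ^ 2 ∧
        e (1, Multiplicative.ofAdd 1) =
          (PresentedGroup.of 0 * PresentedGroup.of 1 : BraidGroup3) ^ 3 := by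
  exact ⟨PB3.pr, PB3.pr_a, PB3.pr_b, PB3.e, PB3.e_injective, PB3.range_eq_ker,
    PB3.e_X, PB3.e_Y, PB3.e_Z⟩
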